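/- arXiv:1503.02465 — 3 statements merged into one kernel-verified Lean document; each statement's English description precedes it below -/
import Mathlib

section
/- For every n ≥ 1, the Hochschild boundary intertwines the signed star-reversal operators: b ∘ T_n = T_{n−1} ∘ b as k-linear maps C_n(A) → C_{n−1}(A). (This is the paper's lemma that the differential of the involutive Hochschild chain complex preserves the involution, stated for a unital star algebra, i.e. an involutive DG category with one object concentrated in degree zero.) -/
/-- The `n`-th Hochschild chain module `C_n(A) = A^{⊗(n+1)}` (tensor product over `k`). -/
abbrev HochschildChains (k A : Type*) [CommRing k] [Ring A] [Algebra k A] (n : ℕ) :=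
  PiTensorProduct k (fun _ : Fin (n + 1) => A)

/-- The `i`-th face of the Hochschild boundary on an elementary tensor
`a₀ ⊗ ⋯ ⊗ a_{n+1}`: multiply the entries in slots `i` and `i+1`. -/
def hochFace {A : Type*} [Mul A] (n : ℕ) (i : Fin (n + 1)) (a : Fin (n + 2) → A) :
    Fin (n + 1) → A := fun j =>
  if (j : ℕ) < (i : ℕ) then a j.castSucc
  else if (j : ℕ) = (i : ℕ) then a j.castSucc * a j.succ
  else a j.succ

/-- The last (cyclic) face of the Hochschild boundary on an elementary tensor:
`(a_{n+1} a₀) ⊗ a₁ ⊗ ⋯ ⊗ a_n`. -/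
def hochCyc {A : Type*} [Mul A] (n : ℕ) (a : Fin (n + 2) → A) : Fin (n + 1) → A := fun j =>
  if j = 0 then a (Fin.last (n + 1)) * a 0 else a j.castSucc

/-- `b : C_{n+1}(A) → C_n(A)` is the Hochschild boundary, i.e. the `k`-linear map
determined on elementary tensors by
`b(a₀⊗⋯⊗a_{n+1}) = Σ_{i=0}^{n} (−1)^i a₀⊗⋯⊗(a_i a_{i+1})⊗⋯⊗a_{n+1}
  + (−1)^{n+1} (a_{n+1} a₀)⊗a₁⊗⋯⊗a_n`. -/
def IsHochschildBoundary (k : Type*) {A : Type*} [CommRing k] [Ring A] [Algebra k A] (n : ℕ)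
    (b : HochschildChains k A (n + 1) →ₗ[k] HochschildChains k A n) : Prop :=
  ∀ a : Fin (n + 2) → A,
    b (PiTensorProduct.tprod k a) =
      (∑ i : Fin (n + 1), ((-1 : ℤ) ^ (i : ℕ)) • PiTensorProduct.tprod k (hochFace n i a))
        + ((-1 : ℤ) ^ (n + 1)) • PiTensorProduct.tprod k (hochCyc n a)

/-- `T : C_n(A) → C_n(A)` is the signed star-reversal operator, i.e. the `k`-linear map
determined on elementary tensors by
`T(a₀⊗a₁⊗⋯⊗a_n) = (−1)^{n(n+1)/2} a₀^⋆ ⊗ a_n^⋆ ⊗ a_{n-1}^⋆ ⊗ ⋯ ⊗ a₁^⋆`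
(the slot `j` of the result is `s (a (-j))`, negation taken in `Fin (n+1)`). -/
def IsStarReversal (k : Type*) {A : Type*} [CommRing k] [Ring A] [Algebra k A]
    (s : A →ₗ[k] A) (n : ℕ)
    (T : HochschildChains k A n →ₗ[k] HochschildChains k A n) : Prop :=
  ∀ a : Fin (n + 1) → A,
    T (PiTensorProduct.tprod k a) =
      ((-1 : ℤ) ^ (n * (n + 1) / 2)) • PiTensorProduct.tprod k (fun j => s (a (-j)))

/-!
Reversing `a₀ ⊗ a₁ ⊗ ⋯ ⊗ a_{n+1}` to `a₀ ⊗ a_{n+1} ⊗ ⋯ ⊗ a₁` and applying the anti-multiplicative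
`⋆` carries the `i`-th face of the boundary to the `(n+1-i)`-th one, the cyclic face and the
`0`-th face being exchanged. After reindexing the boundary sum by `i ↦ n+1-i`, only the signs are
left to compare, and they agree because `(n+1)(n+2)/2 = n(n+1)/2 + (n+1)`.
-/

def hochschildFace {A : Type*} [Mul A] (n : ℕ) (i : Fin (n + 2)) (a : Fin (n + 2) → A) :
    Fin (n + 1) → A :=
  Fin.lastCases (hochCyc n a) (fun i => hochFace n i a) i

@[simp]
theorem hochschildFace_last {A : Type*} [Mul A] (n : ℕ) (a : Fin (n + 2) → A) :
    hochschildFace n (Fin.last (n + 1)) a = hochCyc n a :=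
  Fin.lastCases_last

@[simp]
theorem hochschildFace_castSucc {A : Type*} [Mul A] (n : ℕ) (i : Fin (n + 1))
    (a : Fin (n + 2) → A) : hochschildFace n i.castSucc a = hochFace n i a :=
  Fin.lastCases_castSucc i

theorem IsHochschildBoundary.apply_tprod {k A : Type*} [CommRing k] [Ring A] [Algebra k A]
    {n : ℕ} {b : HochschildChains k A (n + 1) →ₗ[k] HochschildChains k A n}
    (hb : IsHochschildBoundary k n b) (a : Fin (n + 2) → A) :
    b (PiTensorProduct.tprod k a) =
      ∑ i : Fin (n + 2), ((-1 : ℤ) ^ (i : ℕ)) • PiTensorProduct.tprod k (hochschildFace n i a) := by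
  simp [hb a, Fin.sum_univ_castSucc]

def starReverse {A : Type*} (s : A → A) {m : ℕ} (a : Fin (m + 1) → A) : Fin (m + 1) → A :=
  fun j => s (a (-j))

theorem IsStarReversal.apply_tprod {k A : Type*} [CommRing k] [Ring A] [Algebra k A]
    {s : A →ₗ[k] A} {n : ℕ} {T : HochschildChains k A n →ₗ[k] HochschildChains k A n}
    (hT : IsStarReversal k s n T) (a : Fin (n + 1) → A) :
    T (PiTensorProduct.tprod k a) =
      ((-1 : ℤ) ^ (n * (n + 1) / 2)) • PiTensorProduct.tprod k (starReverse s a) :=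
  hT a

theorem Fin.neg_succ {m : ℕ} (j : Fin m) : -(j.succ : Fin (m + 1)) = j.rev.succ := by
  ext
  rw [Fin.val_neg', Fin.val_succ, Fin.val_succ, Fin.val_rev, Nat.mod_eq_of_lt (by omega)]
  omega

theorem Fin.neg_one_eq_last (m : ℕ) : (-1 : Fin (m + 1)) = Fin.last m :=
  Fin.ext Fin.coe_neg_one

section StarReverse

variable {A : Type*} [Mul A] {s : A → A} {n : ℕ}

theorem hochCyc_starReverse (hmul : ∀ x y, s (x * y) = s y * s x)
    (a : Fin (n + 2) → A) :
    hochCyc n (starReverse s a) = starReverse s (hochFace n 0 a) := by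
  funext j
  cases j using Fin.cases with
  | zero => simp [hochCyc, hochFace, starReverse, hmul]
  | succ j => simp [hochCyc, hochFace, starReverse, Fin.neg_succ, Fin.rev_castSucc]

theorem hochFace_zero_starReverse (hmul : ∀ x y, s (x * y) = s y * s x)
    (a : Fin (n + 2) → A) :
    hochFace n 0 (starReverse s a) = starReverse s (hochCyc n a) := by
  funext j
  cases j using Fin.cases with
  | zero => simp [hochCyc, hochFace, starReverse, hmul, Fin.neg_one_eq_last]
  | succ j => simp [hochCyc, hochFace, starReverse, Fin.neg_succ, Fin.rev_succ]

theorem hochFace_succ_starReverse (hmul : ∀ x y, s (x * y) = s y * s x)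
    (a : Fin (n + 2) → A) (i : Fin n) :
    hochFace n i.succ (starReverse s a) = starReverse s (hochFace n i.rev.succ a) := by
  funext j
  cases j using Fin.cases with
  | zero => simp [hochFace, starReverse]
  | succ j =>
    simp only [hochFace, starReverse, Fin.neg_succ, ← Fin.succ_castSucc, Fin.rev_succ,
      Fin.rev_castSucc, Fin.val_succ, Fin.val_rev]
    split_ifs <;> first | rfl | exact (hmul _ _).symm | omega

theorem hochschildFace_starReverse (hmul : ∀ x y, s (x * y) = s y * s x)
    (a : Fin (n + 2) → A) (i : Fin (n + 2)) :
    hochschildFace n i (starReverse s a) = starReverse s (hochschildFace n i.rev a) := by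
  cases i using Fin.lastCases with
  | last =>
    rw [Fin.rev_last, ← Fin.castSucc_zero, hochschildFace_last, hochschildFace_castSucc]
    exact hochCyc_starReverse hmul a
  | cast i =>
    cases i using Fin.cases with
    | zero =>
      rw [Fin.castSucc_zero, Fin.rev_zero, ← Fin.castSucc_zero, hochschildFace_last,
        hochschildFace_castSucc]
      exact hochFace_zero_starReverse hmul a
    | succ i =>
      rw [Fin.rev_castSucc, Fin.rev_succ, Fin.succ_castSucc, hochschildFace_castSucc,
        hochschildFace_castSucc]
      exact hochFace_succ_starReverse hmul a i

end StarReverse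

theorem neg_one_pow_triangle_succ_mul_neg_one_pow_rev {R : Type*} [Ring R] (n : ℕ)
    (i : Fin (n + 2)) :
    (-1 : R) ^ ((n + 1) * (n + 1 + 1) / 2) * (-1) ^ (i.rev : ℕ) =
      (-1) ^ (i : ℕ) * (-1) ^ (n * (n + 1) / 2) := by
  have htri : (n + 1) * (n + 1 + 1) / 2 = n * (n + 1) / 2 + (n + 1) := by
    simpa [Nat.mul_comm] using Nat.triangle_succ (n + 1)
  rw [htri, Fin.val_rev, ← pow_add, ← pow_add, neg_one_pow_eq_pow_mod_two,
    neg_one_pow_eq_pow_mod_two (_ + _)]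
  congr 1
  omega

theorem hochschild_boundary_comm_star_reversal_general
    {k A : Type*} [CommRing k] [Ring A] [Algebra k A]
    (s : A →ₗ[k] A)
    (hmul : ∀ x y : A, s (x * y) = s y * s x)
    (n : ℕ)
    (b : HochschildChains k A (n + 1) →ₗ[k] HochschildChains k A n)
    (hb : IsHochschildBoundary k n b)
    (T₁ : HochschildChains k A (n + 1) →ₗ[k] HochschildChains k A (n + 1))
    (hT₁ : IsStarReversal k s (n + 1) T₁)
    (T₀ : HochschildChains k A n →ₗ[k] HochschildChains k A n)
    (hT₀ : IsStarReversal k s n T₀) :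
    b ∘ₗ T₁ = T₀ ∘ₗ b := by
  refine PiTensorProduct.ext (MultilinearMap.ext fun a => ?_)
  simp only [LinearMap.compMultilinearMap_apply, LinearMap.coe_comp, Function.comp_apply]
  -- `Finset.smul_sum` does not unify with the `ℤ`-action on `PiTensorProduct`,
  -- so the sign is pushed into the sum through `zsmulAddGroupHom`.
  rw [hT₁.apply_tprod, map_zsmul, hb.apply_tprod, hb.apply_tprod, ← zsmulAddGroupHom_apply,
    map_sum, map_sum, ← Equiv.sum_comp Fin.revPerm]
  refine Finset.sum_congr rfl fun i _ => ?_
  rw [zsmulAddGroupHom_apply, Fin.revPerm_apply, hochschildFace_starReverse hmul, Fin.rev_rev,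
    map_zsmul, hT₀.apply_tprod, smul_smul, smul_smul,
    neg_one_pow_triangle_succ_mul_neg_one_pow_rev]

theorem hochschild_boundary_comm_star_reversal
    {k A : Type*} [CommRing k] [Ring A] [Algebra k A]
    (s : A →ₗ[k] A)
    (hmul : ∀ x y : A, s (x * y) = s y * s x)
    (hinv : ∀ x : A, s (s x) = x)
    (hone : s 1 = 1)
    (n : ℕ)
    (b : HochschildChains k A (n + 1) →ₗ[k] HochschildChains k A n)
    (hb : IsHochschildBoundary k n b)
    (T₁ : HochschildChains k A (n + 1) →ₗ[k] HochschildChains k A (n + 1))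
    (hT₁ : IsStarReversal k s (n + 1) T₁)
    (T₀ : HochschildChains k A n →ₗ[k] HochschildChains k A n)
    (hT₀ : IsStarReversal k s n T₀) :
    b ∘ₗ T₁ = T₀ ∘ₗ b :=
  hochschild_boundary_comm_star_reversal_general s hmul n b hb T₁ hT₁ T₀ hT₀
end

section
/- Edge contractions of ribbon graphs commute up to isomorphism: let γ = (H, σ, ι) be a combinatorial ribbon graph and let e₁ and e₂ be two disjoint non-loop edges of γ such that e₂ is a non-loop edge of the contraction γ/e₁ and e₁ is a non-loop edge of the contraction γ/e₂. Then the iterated contractions (γ/e₁)/e₂ and (γ/e₂)/e₁ are isomorphic ribbon graphs. -/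
/-!
Statement 4: Edge contractions of combinatorial ribbon graphs commute up to isomorphism.

A ribbon graph is `(H, σ, ι)` with `H` a finite set of half-edges, `σ` a permutation of `H`
(its orbits are the vertices, encoding the cyclic orders), and `ι` a fixed-point-free
involution (its orbits `{h, ι h}` are the edges).  An edge `{a, ι a}` is a loop when `a`
and `ι a` lie in the same `σ`-orbit (`σ.SameCycle a (ι a)`).

For a non-loop edge `e = {a, b}` (with `b = ι a`), the contraction `γ/e` has half-edge set
`H \ {a, b}`, involution the restriction of `ι`, and vertex permutation `σ_e` obtained from
`τ = σ ∘ (a b)` by deleting `a` and `b` from its cycle decomposition: `σ_e x` is the first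
element of `τ x, τ² x, …` not lying in `{a, b}`.  We encode the contracted graph by a
permutation of all of `H` fixing `a` and `b` and agreeing with `σ_e` elsewhere
(`IsEdgeContraction`); an isomorphism of the two iterated contractions is then a
permutation `g` of `H` preserving the complement of the four deleted half-edges and
commuting there with the contracted vertex permutations and with `ι`.
-/

/-- `σ'` (fixing `a` and `b`) represents the contraction of the edge `{a, b}` with respect
to the permutation `τ = σ ∘ (a b)`: away from `{a, b}`, `σ' x` is the first element of the
sequence `τ x, τ² x, …` which does not lie in `{a, b}`. -/
def IsEdgeContraction {H : Type*} (τ σ' : Equiv.Perm H) (a b : H) : Prop :=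
  σ' a = a ∧ σ' b = b ∧
    ∀ x, x ≠ a → x ≠ b →
      ∃ m : ℕ, 0 < m ∧ σ' x = (τ ^ m) x ∧ (τ ^ m) x ∉ ({a, b} : Set H) ∧
        ∀ l : ℕ, 0 < l → l < m → (τ ^ l) x ∈ ({a, b} : Set H)

/-- One application of `σ' * swap c d` equals a suitable power of `τ * swap c d`,
skipping only through `{a, b}`. -/
lemma rgecc_step {H : Type*} [DecidableEq H] {τ σ' : Equiv.Perm H} {a b c d : H}
    (hc : IsEdgeContraction τ σ' a b)
    (hac : a ≠ c) (had : a ≠ d) (hbc : b ≠ c) (hbd : b ≠ d)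
    {y : H} (hya : y ≠ a) (hyb : y ≠ b) :
    ∃ m : ℕ, 0 < m ∧ (σ' * Equiv.swap c d) y = ((τ * Equiv.swap c d) ^ m) y ∧
      ((τ * Equiv.swap c d) ^ m) y ≠ a ∧ ((τ * Equiv.swap c d) ^ m) y ≠ b ∧
      ∀ l, 0 < l → l < m →
        ((τ * Equiv.swap c d) ^ l) y = a ∨ ((τ * Equiv.swap c d) ^ l) y = b := by
  set z := Equiv.swap c d y with hz
  have hza : z ≠ a ∧ z ≠ b := by
    by_cases h : y = c
    · subst h; rw [hz, Equiv.swap_apply_left]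
      exact ⟨fun h => had h.symm, fun h => hbd h.symm⟩
    · by_cases h' : y = d
      · subst h'; rw [hz, Equiv.swap_apply_right]
        exact ⟨fun h => hac h.symm, fun h => hbc h.symm⟩
      · rw [hz, Equiv.swap_apply_of_ne_of_ne h h']; exact ⟨hya, hyb⟩
  obtain ⟨m, hm0, hσz, hout, hmid⟩ := hc.2.2 z hza.1 hza.2
  simp only [Set.mem_insert_iff, Set.mem_singleton_iff, not_or] at hout hmid
  have key : ∀ l, 1 ≤ l → l ≤ m → ((τ * Equiv.swap c d) ^ l) y = (τ ^ l) z := by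
    intro l
    induction l with
    | zero => omega
    | succ n ih =>
      intro _ hle
      rcases Nat.eq_zero_or_pos n with hn | hn
      · subst hn; simp [Equiv.Perm.mul_apply, ← hz]
      · have h1 : ((τ * Equiv.swap c d) ^ (n + 1)) y
            = (τ * Equiv.swap c d) (((τ * Equiv.swap c d) ^ n) y) := by
          rw [pow_succ']; rfl
        have h2 := ih hn (by omega)
        have hmem := hmid n hn (by omega)
        have hfixswap : Equiv.swap c d ((τ ^ n) z) = (τ ^ n) z := by
          rcases hmem with h | h <;> rw [h]
          · exact Equiv.swap_apply_of_ne_of_ne hac had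
          · exact Equiv.swap_apply_of_ne_of_ne hbc hbd
        rw [h1, h2, Equiv.Perm.mul_apply, hfixswap, ← Equiv.Perm.mul_apply, ← pow_succ']
  refine ⟨m, hm0, ?_, ?_, ?_, ?_⟩
  · rw [key m hm0 le_rfl, Equiv.Perm.mul_apply, ← hz, hσz]
  · rw [key m hm0 le_rfl]; exact hout.1
  · rw [key m hm0 le_rfl]; exact hout.2
  · intro l hl0 hlm
    rw [key l hl0 (le_of_lt hlm)]
    exact hmid l hl0 hlm

/-- Iterating `σ' * swap c d` through `{c, d}` equals a power of `τ * swap c d`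
skipping only through `{a, b, c, d}`. -/
lemma rgecc_compose {H : Type*} [DecidableEq H] {τ σ' : Equiv.Perm H} {a b c d : H}
    (hc : IsEdgeContraction τ σ' a b)
    (hac : a ≠ c) (had : a ≠ d) (hbc : b ≠ c) (hbd : b ≠ d)
    {x : H} (hxa : x ≠ a) (hxb : x ≠ b) :
    ∀ n, 0 < n →
      (∀ l, 0 < l → l < n → ((σ' * Equiv.swap c d) ^ l) x = c ∨
        ((σ' * Equiv.swap c d) ^ l) x = d) →
      ∃ M, 0 < M ∧ ((σ' * Equiv.swap c d) ^ n) x = ((τ * Equiv.swap c d) ^ M) x ∧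
        ((τ * Equiv.swap c d) ^ M) x ≠ a ∧ ((τ * Equiv.swap c d) ^ M) x ≠ b ∧
        ∀ l, 0 < l → l < M →
          ((τ * Equiv.swap c d) ^ l) x = a ∨ ((τ * Equiv.swap c d) ^ l) x = b ∨
          ((τ * Equiv.swap c d) ^ l) x = c ∨ ((τ * Equiv.swap c d) ^ l) x = d := by
  intro n
  induction n with
  | zero => omega
  | succ n ih =>
    intro _ hmid
    rcases Nat.eq_zero_or_pos n with hn | hn
    · subst hn
      obtain ⟨m, hm0, heq, hna, hnb, hskip⟩ := rgecc_step hc hac had hbc hbd hxa hxb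
      exact ⟨m, hm0, by simpa using heq, hna, hnb, fun l hl0 hlm => by
        rcases hskip l hl0 hlm with h | h
        · exact Or.inl h
        · exact Or.inr (Or.inl h)⟩
    · obtain ⟨M, hM0, heq, hMa, hMb, hMskip⟩ := ih hn (fun l hl0 hln =>
        hmid l hl0 (by omega))
      have hyn : ((σ' * Equiv.swap c d) ^ n) x = c ∨ ((σ' * Equiv.swap c d) ^ n) x = d :=
        hmid n hn (by omega)
      have hya : ((τ * Equiv.swap c d) ^ M) x ≠ a := hMa
      obtain ⟨m, hm0, heq', hna, hnb, hskip⟩ :=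
        rgecc_step hc hac had hbc hbd (y := ((τ * Equiv.swap c d) ^ M) x) hMa hMb
      refine ⟨M + m, by omega, ?_, ?_, ?_, ?_⟩
      · have h1 : ((σ' * Equiv.swap c d) ^ (n + 1)) x
            = (σ' * Equiv.swap c d) (((σ' * Equiv.swap c d) ^ n) x) := by
          rw [pow_succ']; rfl
        rw [h1, heq, heq', add_comm M m, pow_add, Equiv.Perm.mul_apply]
      · rw [add_comm M m, pow_add, Equiv.Perm.mul_apply]; exact hna
      · rw [add_comm M m, pow_add, Equiv.Perm.mul_apply]; exact hnb
      · intro l hl0 hlM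
        rcases lt_trichotomy l M with h | h | h
        · rcases hMskip l hl0 h with h' | h' | h' | h'
          · exact Or.inl h'
          · exact Or.inr (Or.inl h')
          · exact Or.inr (Or.inr (Or.inl h'))
          · exact Or.inr (Or.inr (Or.inr h'))
        · subst h
          rw [← heq]
          rcases hyn with h' | h'
          · exact Or.inr (Or.inr (Or.inl h'))
          · exact Or.inr (Or.inr (Or.inr h'))
        · obtain ⟨k, rfl⟩ : ∃ k, l = k + M := ⟨l - M, by omega⟩
          have hrw : ((τ * Equiv.swap c d) ^ (k + M)) x
              = ((τ * Equiv.swap c d) ^ k) (((τ * Equiv.swap c d) ^ M) x) := by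
            rw [pow_add, Equiv.Perm.mul_apply]
          rw [hrw]
          rcases hskip k (by omega) (by omega) with h' | h'
          · exact Or.inl h'
          · exact Or.inr (Or.inl h')

theorem ribbon_graph_edge_contractions_commute
    {H : Type*} [Fintype H] [DecidableEq H]
    (σ ι : Equiv.Perm H)
    (hinv : ∀ x, ι (ι x) = x)
    (hfix : ∀ x, ι x ≠ x)
    (a₁ a₂ : H)
    -- the edges e₁ = {a₁, ι a₁} and e₂ = {a₂, ι a₂} are disjoint
    (hdisj : Disjoint ({a₁, ι a₁} : Set H) ({a₂, ι a₂} : Set H))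
    -- e₁ and e₂ are non-loop edges of γ
    (hnl₁ : ¬ σ.SameCycle a₁ (ι a₁))
    (hnl₂ : ¬ σ.SameCycle a₂ (ι a₂))
    -- γ/e₁ and γ/e₂
    (σ₁ σ₂ : Equiv.Perm H)
    (hσ₁ : IsEdgeContraction (σ * Equiv.swap a₁ (ι a₁)) σ₁ a₁ (ι a₁))
    (hσ₂ : IsEdgeContraction (σ * Equiv.swap a₂ (ι a₂)) σ₂ a₂ (ι a₂))
    -- e₂ is a non-loop edge of γ/e₁, and e₁ is a non-loop edge of γ/e₂
    (hnl₁₂ : ¬ σ₁.SameCycle a₂ (ι a₂))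
    (hnl₂₁ : ¬ σ₂.SameCycle a₁ (ι a₁))
    -- (γ/e₁)/e₂ and (γ/e₂)/e₁
    (σ₁₂ σ₂₁ : Equiv.Perm H)
    (hσ₁₂ : IsEdgeContraction (σ₁ * Equiv.swap a₂ (ι a₂)) σ₁₂ a₂ (ι a₂))
    (hσ₂₁ : IsEdgeContraction (σ₂ * Equiv.swap a₁ (ι a₁)) σ₂₁ a₁ (ι a₁)) :
    -- the iterated contractions are isomorphic ribbon graphs
    ∃ g : Equiv.Perm H,
      ∀ x, x ∉ ({a₁, ι a₁, a₂, ι a₂} : Set H) →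
        g x ∉ ({a₁, ι a₁, a₂, ι a₂} : Set H) ∧
        g (σ₁₂ x) = σ₂₁ (g x) ∧
        g (ι x) = ι (g x) := by
  set b₁ := ι a₁ with hb₁
  set b₂ := ι a₂ with hb₂
  have hd : a₁ ≠ a₂ ∧ a₁ ≠ b₂ ∧ b₁ ≠ a₂ ∧ b₁ ≠ b₂ := by
    rw [Set.disjoint_left] at hdisj
    exact ⟨fun h => hdisj (show a₁ ∈ ({a₁, b₁} : Set H) by simp) (by simp [h]),
      fun h => hdisj (show a₁ ∈ ({a₁, b₁} : Set H) by simp) (by simp [h]),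
      fun h => hdisj (show b₁ ∈ ({a₁, b₁} : Set H) by simp) (by simp [h]),
      fun h => hdisj (show b₁ ∈ ({a₁, b₁} : Set H) by simp) (by simp [h])⟩
  obtain ⟨h12, h12', h12'', h12'''⟩ := hd
  set s₁ := Equiv.swap a₁ b₁ with hs₁
  set s₂ := Equiv.swap a₂ b₂ with hs₂
  have hswap : s₂ * s₁ = s₁ * s₂ := by
    have hdis : (s₁ : Equiv.Perm H).Disjoint s₂ := by
      intro x
      by_cases h1 : x = a₁
      · subst h1; right; exact Equiv.swap_apply_of_ne_of_ne h12 h12'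
      · by_cases h2 : x = b₁
        · subst h2; right; exact Equiv.swap_apply_of_ne_of_ne h12'' h12'''
        · left; exact Equiv.swap_apply_of_ne_of_ne h1 h2
    exact hdis.commute.eq.symm
  -- full description of σ₁₂ off the four points
  have key₁ : ∀ x : H, x ≠ a₁ → x ≠ b₁ → x ≠ a₂ → x ≠ b₂ →
      ∃ M, 0 < M ∧ σ₁₂ x = ((σ * s₁ * s₂) ^ M) x ∧
        (((σ * s₁ * s₂) ^ M) x ≠ a₁ ∧ ((σ * s₁ * s₂) ^ M) x ≠ b₁ ∧
         ((σ * s₁ * s₂) ^ M) x ≠ a₂ ∧ ((σ * s₁ * s₂) ^ M) x ≠ b₂) ∧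
        ∀ l, 0 < l → l < M →
          ((σ * s₁ * s₂) ^ l) x = a₁ ∨ ((σ * s₁ * s₂) ^ l) x = b₁ ∨
          ((σ * s₁ * s₂) ^ l) x = a₂ ∨ ((σ * s₁ * s₂) ^ l) x = b₂ := by
    intro x hx1 hx2 hx3 hx4
    obtain ⟨n, hn0, heq, hout, hmid⟩ := hσ₁₂.2.2 x hx3 hx4
    simp only [Set.mem_insert_iff, Set.mem_singleton_iff, not_or] at hout hmid
    obtain ⟨M, hM0, heq', hMa, hMb, hMskip⟩ :=
      rgecc_compose hσ₁ h12 h12' h12'' h12''' hx1 hx2 n hn0 hmid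
    refine ⟨M, hM0, by rw [heq, heq'], ⟨hMa, hMb, ?_, ?_⟩, ?_⟩
    · rw [← heq']; exact hout.1
    · rw [← heq']; exact hout.2
    · intro l hl0 hlM
      rcases hMskip l hl0 hlM with h | h | h | h
      · exact Or.inl h
      · exact Or.inr (Or.inl h)
      · exact Or.inr (Or.inr (Or.inl h))
      · exact Or.inr (Or.inr (Or.inr h))
  -- full description of σ₂₁ off the four points, with the same permutation σ * s₁ * s₂
  have key₂ : ∀ x : H, x ≠ a₁ → x ≠ b₁ → x ≠ a₂ → x ≠ b₂ →
      ∃ M, 0 < M ∧ σ₂₁ x = ((σ * s₁ * s₂) ^ M) x ∧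
        (((σ * s₁ * s₂) ^ M) x ≠ a₁ ∧ ((σ * s₁ * s₂) ^ M) x ≠ b₁ ∧
         ((σ * s₁ * s₂) ^ M) x ≠ a₂ ∧ ((σ * s₁ * s₂) ^ M) x ≠ b₂) ∧
        ∀ l, 0 < l → l < M →
          ((σ * s₁ * s₂) ^ l) x = a₁ ∨ ((σ * s₁ * s₂) ^ l) x = b₁ ∨
          ((σ * s₁ * s₂) ^ l) x = a₂ ∨ ((σ * s₁ * s₂) ^ l) x = b₂ := by
    intro x hx1 hx2 hx3 hx4
    obtain ⟨n, hn0, heq, hout, hmid⟩ := hσ₂₁.2.2 x hx1 hx2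
    simp only [Set.mem_insert_iff, Set.mem_singleton_iff, not_or] at hout hmid
    obtain ⟨M, hM0, heq', hMa, hMb, hMskip⟩ :=
      rgecc_compose hσ₂ h12.symm h12''.symm h12'.symm h12'''.symm hx3 hx4 n hn0 hmid
    have hτeq : σ * s₂ * s₁ = σ * s₁ * s₂ := by
      rw [mul_assoc, hswap, ← mul_assoc]
    rw [hτeq] at heq' hMa hMb hMskip
    refine ⟨M, hM0, by rw [heq, heq'], ⟨?_, ?_, hMa, hMb⟩, ?_⟩
    · rw [← heq']; exact hout.1
    · rw [← heq']; exact hout.2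
    · intro l hl0 hlM
      rcases hMskip l hl0 hlM with h | h | h | h
      · exact Or.inr (Or.inr (Or.inl h))
      · exact Or.inr (Or.inr (Or.inr h))
      · exact Or.inl h
      · exact Or.inr (Or.inl h)
  refine ⟨Equiv.refl H, ?_⟩
  intro x hx
  simp only [Set.mem_insert_iff, Set.mem_singleton_iff, not_or] at hx
  obtain ⟨hx1, hx2, hx3, hx4⟩ := hx
  obtain ⟨M, hM0, heq, ⟨hA, hB, hC, hD⟩, hskip⟩ := key₁ x hx1 hx2 hx3 hx4
  obtain ⟨M', hM0', heq', ⟨hA', hB', hC', hD'⟩, hskip'⟩ := key₂ x hx1 hx2 hx3 hx4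
  have hMM : M = M' := by
    rcases lt_trichotomy M M' with h | h | h
    · rcases hskip' M hM0 h with h' | h' | h' | h'
      · exact absurd h' hA
      · exact absurd h' hB
      · exact absurd h' hC
      · exact absurd h' hD
    · exact h
    · rcases hskip M' hM0' h with h' | h' | h' | h'
      · exact absurd h' hA'
      · exact absurd h' hB'
      · exact absurd h' hC'
      · exact absurd h' hD'
  have hσeq : σ₁₂ x = σ₂₁ x := by rw [heq, heq', hMM]
  refine ⟨?_, ?_, rfl⟩
  · simp only [Equiv.refl_apply, Set.mem_insert_iff, Set.mem_singleton_iff, not_or]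
    exact ⟨hx1, hx2, hx3, hx4⟩
  · simpa using hσeq
end

section
/- Edge contractions of Möbius graphs commute up to isomorphism: let γ = (H, σ, ι, c) be a combinatorial Möbius graph and let e₁ and e₂ be two disjoint non-loop edges of γ, each of whose two half-edges carry the same colour, such that e₂ remains a non-loop edge of γ/e₁ and e₁ remains a non-loop edge of γ/e₂. Then the iterated contractions (γ/e₁)/e₂ and (γ/e₂)/e₁ are isomorphic Möbius graphs. -/
private lemma pair_mem_iff' {H : Type*} {x a b : H} :
    x ∈ ({a, b} : Set H) ↔ x = a ∨ x = b := by simp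

/-- One step of `σ₁ * swap a₂ b₂` is a positive iterate of `σ * swap a₁ b₁ * swap a₂ b₂`
with intermediate points in `{a₁, b₁}`, landing outside `{a₁, b₁}`. -/
private lemma EC_step {H : Type*} [DecidableEq H] (σ σ₁ : Equiv.Perm H) (a₁ b₁ a₂ b₂ : H)
    (h1 : a₁ ≠ a₂) (h2 : a₁ ≠ b₂) (h3 : b₁ ≠ a₂) (h4 : b₁ ≠ b₂)
    (hσ₁ : IsEdgeContraction (σ * Equiv.swap a₁ b₁) σ₁ a₁ b₁)
    (y : H) (hy1 : y ≠ a₁) (hy2 : y ≠ b₁) :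
    ∃ m : ℕ, 0 < m ∧
      (σ₁ * Equiv.swap a₂ b₂) y = ((σ * Equiv.swap a₁ b₁ * Equiv.swap a₂ b₂) ^ m) y ∧
      (σ₁ * Equiv.swap a₂ b₂) y ≠ a₁ ∧ (σ₁ * Equiv.swap a₂ b₂) y ≠ b₁ ∧
      ∀ l, 0 < l → l < m →
        ((σ * Equiv.swap a₁ b₁ * Equiv.swap a₂ b₂) ^ l) y = a₁ ∨
        ((σ * Equiv.swap a₁ b₁ * Equiv.swap a₂ b₂) ^ l) y = b₁ := by
  set T := σ * Equiv.swap a₁ b₁ * Equiv.swap a₂ b₂ with hT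
  set τ := σ * Equiv.swap a₁ b₁ with hτ
  set z := Equiv.swap a₂ b₂ y with hz
  have hz1 : z ≠ a₁ ∧ z ≠ b₁ := by
    by_cases hya : y = a₂
    · subst hya
      rw [hz, Equiv.swap_apply_left]
      exact ⟨Ne.symm h2, Ne.symm h4⟩
    · by_cases hyb : y = b₂
      · subst hyb
        rw [hz, Equiv.swap_apply_right]
        exact ⟨Ne.symm h1, Ne.symm h3⟩
      · rw [hz, Equiv.swap_apply_of_ne_of_ne hya hyb]
        exact ⟨hy1, hy2⟩
  obtain ⟨m, hm, hval, hnot, hint⟩ := hσ₁.2.2 z hz1.1 hz1.2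
  rw [pair_mem_iff'] at hnot
  push_neg at hnot
  -- the iterates of T starting from y match the iterates of τ starting from z
  have claim : ∀ j, j + 1 ≤ m → (T ^ (j + 1)) y = (τ ^ (j + 1)) z := by
    intro j
    induction j with
    | zero =>
      intro _
      simp only [zero_add, pow_one, hT, hτ, hz, Equiv.Perm.mul_apply]
    | succ j ih =>
      intro hj
      have ihj := ih (by omega)
      have hw := hint (j + 1) (by omega) (by omega)
      rw [pair_mem_iff'] at hw
      have hw2 : Equiv.swap a₂ b₂ ((τ ^ (j + 1)) z) = (τ ^ (j + 1)) z := by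
        rcases hw with hw | hw <;> rw [hw]
        · exact Equiv.swap_apply_of_ne_of_ne h1 h2
        · exact Equiv.swap_apply_of_ne_of_ne h3 h4
      calc (T ^ (j + 1 + 1)) y = T ((T ^ (j + 1)) y) := by
            rw [pow_succ', Equiv.Perm.mul_apply]
        _ = T ((τ ^ (j + 1)) z) := by rw [ihj]
        _ = τ ((τ ^ (j + 1)) z) := by
            rw [hT, Equiv.Perm.mul_apply, hw2]
        _ = (τ ^ (j + 1 + 1)) z := by
            simp only [hτ, pow_succ', Equiv.Perm.mul_apply]
  obtain ⟨j, rfl⟩ : ∃ j, m = j + 1 := ⟨m - 1, by omega⟩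
  have hmain : (σ₁ * Equiv.swap a₂ b₂) y = (T ^ (j + 1)) y := by
    rw [Equiv.Perm.mul_apply, ← hz, hval, claim j le_rfl]
  refine ⟨j + 1, by omega, hmain, ?_, ?_, ?_⟩
  · rw [hmain, claim j le_rfl]; exact hnot.1
  · rw [hmain, claim j le_rfl]; exact hnot.2
  · intro l hl hlm
    obtain ⟨l', rfl⟩ : ∃ l', l = l' + 1 := ⟨l - 1, by omega⟩
    rw [claim l' (by omega)]
    have := hint (l' + 1) (by omega) (by omega)
    rwa [pair_mem_iff'] at this

/-- The double contraction `σ₁₂` is, outside the four points, the "first return" map of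
`T = σ * swap a₁ b₁ * swap a₂ b₂` avoiding all four points. -/
private lemma EC_double {H : Type*} [DecidableEq H] (σ σ₁ σ₁₂ : Equiv.Perm H)
    (a₁ b₁ a₂ b₂ : H)
    (h1 : a₁ ≠ a₂) (h2 : a₁ ≠ b₂) (h3 : b₁ ≠ a₂) (h4 : b₁ ≠ b₂)
    (hσ₁ : IsEdgeContraction (σ * Equiv.swap a₁ b₁) σ₁ a₁ b₁)
    (hσ₁₂ : IsEdgeContraction (σ₁ * Equiv.swap a₂ b₂) σ₁₂ a₂ b₂)
    (x : H) (hx1 : x ≠ a₁) (hx2 : x ≠ b₁) (hx3 : x ≠ a₂) (hx4 : x ≠ b₂) :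
    ∃ M : ℕ, 0 < M ∧
      σ₁₂ x = ((σ * Equiv.swap a₁ b₁ * Equiv.swap a₂ b₂) ^ M) x ∧
      ¬ (((σ * Equiv.swap a₁ b₁ * Equiv.swap a₂ b₂) ^ M) x = a₁ ∨
         ((σ * Equiv.swap a₁ b₁ * Equiv.swap a₂ b₂) ^ M) x = b₁ ∨
         ((σ * Equiv.swap a₁ b₁ * Equiv.swap a₂ b₂) ^ M) x = a₂ ∨
         ((σ * Equiv.swap a₁ b₁ * Equiv.swap a₂ b₂) ^ M) x = b₂) ∧
      ∀ l, 0 < l → l < M →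
        (((σ * Equiv.swap a₁ b₁ * Equiv.swap a₂ b₂) ^ l) x = a₁ ∨
         ((σ * Equiv.swap a₁ b₁ * Equiv.swap a₂ b₂) ^ l) x = b₁ ∨
         ((σ * Equiv.swap a₁ b₁ * Equiv.swap a₂ b₂) ^ l) x = a₂ ∨
         ((σ * Equiv.swap a₁ b₁ * Equiv.swap a₂ b₂) ^ l) x = b₂) := by
  set T := σ * Equiv.swap a₁ b₁ * Equiv.swap a₂ b₂ with hT
  set τ' := σ₁ * Equiv.swap a₂ b₂ with hτ'
  obtain ⟨n, hn, hval, hnot, hint⟩ := hσ₁₂.2.2 x hx3 hx4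
  rw [pair_mem_iff'] at hnot
  push_neg at hnot
  have claim : ∀ k, k ≤ n → ∃ M, k ≤ M ∧ (k = 0 → M = 0) ∧
      (τ' ^ k) x = (T ^ M) x ∧ (τ' ^ k) x ≠ a₁ ∧ (τ' ^ k) x ≠ b₁ ∧
      ∀ l, 0 < l → l < M →
        ((T ^ l) x = a₁ ∨ (T ^ l) x = b₁ ∨ (T ^ l) x = a₂ ∨ (T ^ l) x = b₂) := by
    intro k
    induction k with
    | zero =>
      intro _
      exact ⟨0, le_rfl, fun _ => rfl, rfl, hx1, hx2, fun l hl hl' => by omega⟩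
    | succ k ih =>
      intro hk
      obtain ⟨M, hkM, hM0, heq, hne1, hne2, hintM⟩ := ih (by omega)
      obtain ⟨m, hm, hstep, hsne1, hsne2, hsint⟩ :=
        EC_step σ σ₁ a₁ b₁ a₂ b₂ h1 h2 h3 h4 hσ₁ ((τ' ^ k) x) hne1 hne2
      refine ⟨m + M, by omega, by omega, ?_, ?_, ?_, ?_⟩
      · calc (τ' ^ (k + 1)) x = τ' ((τ' ^ k) x) := by
              rw [pow_succ', Equiv.Perm.mul_apply]
          _ = (T ^ m) ((τ' ^ k) x) := hstep
          _ = (T ^ m) ((T ^ M) x) := by rw [heq]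
          _ = (T ^ (m + M)) x := by rw [pow_add, Equiv.Perm.mul_apply]
      · have : (τ' ^ (k + 1)) x = τ' ((τ' ^ k) x) := by
          rw [pow_succ', Equiv.Perm.mul_apply]
        rw [this]; exact hsne1
      · have : (τ' ^ (k + 1)) x = τ' ((τ' ^ k) x) := by
          rw [pow_succ', Equiv.Perm.mul_apply]
        rw [this]; exact hsne2
      · intro l hl hlm
        rcases lt_trichotomy l M with hlt | hleq | hgt
        · exact hintM l hl hlt
        · -- l = M, so M > 0, so k > 0, so (τ' ^ k) x ∈ {a₂, b₂}
          subst hleq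
          have hk0' : 0 < k := by
            rcases Nat.eq_zero_or_pos k with h | h
            · exact absurd (hM0 h) (by omega)
            · exact h
          have hkn : k < n := by omega
          have := hint k hk0' hkn
          rw [pair_mem_iff'] at this
          rw [← heq]
          tauto
        · obtain ⟨l', hl', rfl⟩ : ∃ l', 0 < l' ∧ l = l' + M := ⟨l - M, by omega, by omega⟩
          have : (T ^ (l' + M)) x = (T ^ l') ((τ' ^ k) x) := by
            rw [pow_add, Equiv.Perm.mul_apply, heq]
          rw [this]
          have := hsint l' hl' (by omega)
          tauto
  obtain ⟨M, hnM, _, heq, hne1, hne2, hintM⟩ := claim n le_rfl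
  refine ⟨M, by omega, ?_, ?_, hintM⟩
  · rw [hval, heq]
  · rw [← heq]
    push_neg
    exact ⟨hne1, hne2, hnot.1, hnot.2⟩

private lemma first_exit_unique {H : Type*} (T : Equiv.Perm H) (x : H) (P : H → Prop)
    {M N : ℕ} (hM : 0 < M) (hN : 0 < N)
    (hMn : ¬ P ((T ^ M) x)) (hMi : ∀ l, 0 < l → l < M → P ((T ^ l) x))
    (hNn : ¬ P ((T ^ N) x)) (hNi : ∀ l, 0 < l → l < N → P ((T ^ l) x)) : M = N := by
  by_contra h
  rcases Nat.lt_or_ge M N with h' | h'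
  · exact hMn (hNi M hM h')
  · exact hNn (hMi N hN (lt_of_le_of_ne h' (Ne.symm h)))

private lemma swap_mul_swap_comm {H : Type*} [DecidableEq H] {a b c d : H}
    (h1 : a ≠ c) (h2 : a ≠ d) (h3 : b ≠ c) (h4 : b ≠ d) :
    Equiv.swap a b * Equiv.swap c d = Equiv.swap c d * Equiv.swap a b := by
  ext x
  simp only [Equiv.Perm.mul_apply, Equiv.swap_apply_def]
  split_ifs <;> simp_all


theorem mobius_graph_edge_contractions_commute
    {H : Type*} [Fintype H] [DecidableEq H]
    (σ ι : Equiv.Perm H)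
    (hinv : ∀ x, ι (ι x) = x)
    (hfix : ∀ x, ι x ≠ x)
    (c : H → ZMod 2)
    (a₁ a₂ : H)
    -- the edges e₁ = {a₁, ι a₁} and e₂ = {a₂, ι a₂} are disjoint
    (hdisj : Disjoint ({a₁, ι a₁} : Set H) ({a₂, ι a₂} : Set H))
    -- both half-edges of each of e₁ and e₂ carry the same colour
    (hc₁ : c a₁ = c (ι a₁))
    (hc₂ : c a₂ = c (ι a₂))
    -- e₁ and e₂ are non-loop edges of γ
    (hnl₁ : ¬ σ.SameCycle a₁ (ι a₁))
    (hnl₂ : ¬ σ.SameCycle a₂ (ι a₂))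
    -- γ/e₁ and γ/e₂ (the colourings are the restrictions of c)
    (σ₁ σ₂ : Equiv.Perm H)
    (hσ₁ : IsEdgeContraction (σ * Equiv.swap a₁ (ι a₁)) σ₁ a₁ (ι a₁))
    (hσ₂ : IsEdgeContraction (σ * Equiv.swap a₂ (ι a₂)) σ₂ a₂ (ι a₂))
    -- e₂ remains a non-loop edge of γ/e₁, and e₁ remains a non-loop edge of γ/e₂
    (hnl₁₂ : ¬ σ₁.SameCycle a₂ (ι a₂))
    (hnl₂₁ : ¬ σ₂.SameCycle a₁ (ι a₁))
    -- (γ/e₁)/e₂ and (γ/e₂)/e₁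
    (σ₁₂ σ₂₁ : Equiv.Perm H)
    (hσ₁₂ : IsEdgeContraction (σ₁ * Equiv.swap a₂ (ι a₂)) σ₁₂ a₂ (ι a₂))
    (hσ₂₁ : IsEdgeContraction (σ₂ * Equiv.swap a₁ (ι a₁)) σ₂₁ a₁ (ι a₁)) :
    -- the iterated contractions are isomorphic Möbius graphs
    ∃ g : Equiv.Perm H,
      (∀ x, x ∉ ({a₁, ι a₁, a₂, ι a₂} : Set H) →
        -- g preserves the remaining half-edges, commutes with ι, and preserves
        -- the sum modulo 2 of the colours on each edge
        g x ∉ ({a₁, ι a₁, a₂, ι a₂} : Set H) ∧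
        g (ι x) = ι (g x) ∧
        c x + c (ι x) = c (g x) + c (ι (g x))) ∧
      -- on each vertex (σ₁₂-orbit) of (γ/e₁)/e₂, g either preserves the cyclic order
      -- and the colours, or reverses the cyclic order and the colours
      (∀ x, x ∉ ({a₁, ι a₁, a₂, ι a₂} : Set H) →
        (∀ y, y ∉ ({a₁, ι a₁, a₂, ι a₂} : Set H) → σ₁₂.SameCycle x y →
          g (σ₁₂ y) = σ₂₁ (g y) ∧ c (g y) = c y) ∨
        (∀ y, y ∉ ({a₁, ι a₁, a₂, ι a₂} : Set H) → σ₁₂.SameCycle x y →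
          g (σ₁₂ y) = σ₂₁⁻¹ (g y) ∧ c (g y) = c y + 1)) := by
  -- disjointness facts
  have d1 : a₁ ∉ ({a₂, ι a₂} : Set H) := Set.disjoint_left.mp hdisj (by simp)
  have d2 : ι a₁ ∉ ({a₂, ι a₂} : Set H) := Set.disjoint_left.mp hdisj (by simp)
  simp only [Set.mem_insert_iff, Set.mem_singleton_iff, not_or] at d1 d2
  -- the two swaps commute since their supports are disjoint
  have hcomm : σ * Equiv.swap a₂ (ι a₂) * Equiv.swap a₁ (ι a₁)
      = σ * Equiv.swap a₁ (ι a₁) * Equiv.swap a₂ (ι a₂) := by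
    rw [mul_assoc, mul_assoc,
      swap_mul_swap_comm (Ne.symm d1.1) (Ne.symm d2.1) (Ne.symm d1.2) (Ne.symm d2.2)]
  -- the key fact: σ₁₂ and σ₂₁ agree outside the four points
  have key : ∀ y : H, y ∉ ({a₁, ι a₁, a₂, ι a₂} : Set H) → σ₁₂ y = σ₂₁ y := by
    intro y hy
    simp only [Set.mem_insert_iff, Set.mem_singleton_iff, not_or] at hy
    obtain ⟨hy1, hy2, hy3, hy4⟩ := hy
    obtain ⟨M, hM, e1, n1, i1⟩ :=
      EC_double σ σ₁ σ₁₂ a₁ (ι a₁) a₂ (ι a₂) d1.1 d1.2 d2.1 d2.2 hσ₁ hσ₁₂ y hy1 hy2 hy3 hy4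
    obtain ⟨N, hN, e2, n2, i2⟩ :=
      EC_double σ σ₂ σ₂₁ a₂ (ι a₂) a₁ (ι a₁) (Ne.symm d1.1) (Ne.symm d2.1)
        (Ne.symm d1.2) (Ne.symm d2.2) hσ₂ hσ₂₁ y hy3 hy4 hy1 hy2
    rw [hcomm] at e2 n2 i2
    set T := σ * Equiv.swap a₁ (ι a₁) * Equiv.swap a₂ (ι a₂) with hT
    have hMN : M = N := by
      refine first_exit_unique T y
        (fun z => z = a₁ ∨ z = ι a₁ ∨ z = a₂ ∨ z = ι a₂) hM hN ?_ ?_ ?_ ?_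
      · tauto
      · intro l hl hl'; have := i1 l hl hl'; tauto
      · tauto
      · intro l hl hl'; have := i2 l hl hl'; tauto
    rw [e1, e2, hMN]
  refine ⟨1, ?_, ?_⟩
  · intro x hx
    refine ⟨?_, ?_, ?_⟩ <;> simp [hx]
  · intro x hx
    left
    intro y hy _
    exact ⟨by simpa using key y hy, by simp⟩
end
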